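/- Let λ, μ ∈ ℕ^n be integer partitions (padded with zeros) with λ ⪰* μ, i.e., μ ∈ conv({0} ∪ S_n·λ), and let c > 0. Write |λ| = Σ_i λ_i, |μ| = Σ_i μ_i. (1) If |λ| > |μ|, then for any n ≥ |λ| and any c > 0, the inequality m_λ^{(n)}(x) − c·m_μ^{(n)}(x) ≥ δ holds for all x ∈ ℝ_{>0}^n, where δ = −c·((|λ|−|μ|)/|λ|)·(c|μ|/|λ|)^{|μ|/(|λ|−|μ|)}; equality holds if and only if x₁ = ⋯ = xₙ = (c|μ|/|λ|)^{1/(|λ|−|μ|)}. (2) If |λ| = |μ| and 0 < c ≤ 1, then m_λ^{(n)}(x) − c·m_μ^{(n)}(x) ≥ 0 for all x ∈ ℝ_{>0}^n; the inequality is strict everywhere unless c = 1, and for c = 1 equality holds on all of ℝ_{>0}^n if λ = μ, and exactly on the diagonal {(t,…,t) : t > 0} otherwise. -/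

import Mathlib

/-
Write `μ = ∑_τ q_τ (τ·λ)` with `q ≥ 0` and `θ = ∑_τ q_τ ≤ 1`. Each monomial `x^{σμ}` is then the
weighted geometric mean of the `x^{στλ}` (weights `q_τ`) and of `1` (weight `1 - θ`), so AM-GM,
i.e. the strict convexity of `exp`, gives `m_μ ≤ θ m_λ + (1 - θ)` on the positive orthant.
Since `|μ| = θ |λ|`, applying this at `x / t₀`, where `t₀` is the critical point of
`t ↦ t^|λ| - c t^|μ|`, and using the homogeneity of monomial means gives part (1); when
`|λ| = |μ|` we have `θ = 1`, so `m_μ ≤ m_λ`, which gives part (2). In the equality cases AM-GM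
forces `∑_k u_k log x_{ρ k}` to be independent of `ρ ∈ S_n` for some non-constant `u` (`u = λ`, or
the difference of two distinct permutations of `λ`), and comparing `ρ` with a transposition
composed with `ρ` shows that `log x` is constant.
-/

open Finset

noncomputable def dotp {n : ℕ} (a x : Fin n → ℝ) : ℝ := ∑ i, a i * x i

noncomputable def monom {n : ℕ} (α : Fin n → ℕ) (x : Fin n → ℝ) : ℝ := ∏ i, x i ^ α i

/-- The AGE cone `C_AGE(A, β)`: nonnegative signomials supported on `A ∪ {β}` whose
coefficients on `A` are nonnegative (only the `β`-term may be negative). -/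
def IsAGE {n : ℕ} (A : Finset (Fin n → ℝ)) (β : Fin n → ℝ) (f : (Fin n → ℝ) → ℝ) : Prop :=
  ∃ c : (Fin n → ℝ) → ℝ, (∀ α ∈ A, 0 ≤ c α) ∧
    (∀ x, f x = (∑ α ∈ A, c α * Real.exp (dotp α x)) + c β * Real.exp (dotp β x)) ∧
    (∀ x, 0 ≤ f x)

/-- The SAGE cone `C_SAGE(T) = Σ_{β ∈ T} C_AGE(T \ {β}, β)`. -/
def IsSAGE {n : ℕ} (T : Finset (Fin n → ℝ)) (f : (Fin n → ℝ) → ℝ) : Prop :=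
  ∃ g : (Fin n → ℝ) → ((Fin n → ℝ) → ℝ),
    (∀ β ∈ T, IsAGE (T.erase β) β (g β)) ∧ (∀ x, f x = ∑ β ∈ T, g β x)

/-- `f^SAGE = sup {l : f - l ∈ C_SAGE(T ∪ {0})}`, as an extended real number. -/
noncomputable def sageBound {n : ℕ} (T : Finset (Fin n → ℝ)) (f : (Fin n → ℝ) → ℝ) : EReal :=
  sSup ((fun l : ℝ => (l : EReal)) '' {l : ℝ | IsSAGE (insert 0 T) (fun x => f x - l)})

/-- `f* = inf_{x ∈ ℝⁿ} f(x)`, as an extended real number. -/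
noncomputable def infStar {n : ℕ} (f : (Fin n → ℝ) → ℝ) : EReal := ⨅ x, (f x : EReal)

/-- The AG cone `C_AG(A, β)` of nonnegative polynomials with nonnegative coefficients
on `A`, vanishing coefficients on non-even points of `A`, and possibly negative
coefficient on `β`. -/
def IsAG {n : ℕ} (A : Finset (Fin n → ℕ)) (β : Fin n → ℕ) (f : (Fin n → ℝ) → ℝ) : Prop :=
  ∃ c : (Fin n → ℕ) → ℝ, (∀ α ∈ A, 0 ≤ c α) ∧
    (∀ γ ∈ A, (¬ ∀ i, Even (γ i)) → c γ = 0) ∧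
    (∀ x, f x = (∑ α ∈ A, c α * monom α x) + c β * monom β x) ∧
    (∀ x, 0 ≤ f x)

/-- The SONC cone `C_SONC(T) = Σ_{β ∈ T} C_AG(T \ {β}, β)`. -/
def IsSONC {n : ℕ} (T : Finset (Fin n → ℕ)) (f : (Fin n → ℝ) → ℝ) : Prop :=
  ∃ g : (Fin n → ℕ) → ((Fin n → ℝ) → ℝ),
    (∀ β ∈ T, IsAG (T.erase β) β (g β)) ∧ (∀ x, f x = ∑ β ∈ T, g β x)

/-- `f^SONC = sup {l : f - l ∈ C_SONC(T ∪ {0})}`, as an extended real number. -/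
noncomputable def soncBound {n : ℕ} (T : Finset (Fin n → ℕ)) (f : (Fin n → ℝ) → ℝ) : EReal :=
  sSup ((fun l : ℝ => (l : EReal)) '' {l : ℝ | IsSONC (insert 0 T) (fun x => f x - l)})

/-- Action of a permutation on a real vector: `(σ·x) i = x (σ⁻¹ i)`. -/
def permAct {n : ℕ} (σ : Equiv.Perm (Fin n)) (x : Fin n → ℝ) : Fin n → ℝ := fun i => x (σ⁻¹ i)

/-- Action of a permutation on an exponent vector. -/
def permActN {m : ℕ} (σ : Equiv.Perm (Fin m)) (x : Fin m → ℕ) : Fin m → ℕ := fun i => x (σ⁻¹ i)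

/-- The orbit of a vector under the symmetric group, as a finite set. -/
noncomputable def orbitF {n : ℕ} (v : Fin n → ℝ) : Finset (Fin n → ℝ) :=
  Finset.univ.image (fun σ : Equiv.Perm (Fin n) => permAct σ v)

/-- The monomial mean `m_α^{(m)}(x) = (1/m!) Σ_{σ ∈ S_m} x^{σ(α)}`. -/
noncomputable def mmean {m : ℕ} (α : Fin m → ℕ) (x : Fin m → ℝ) : ℝ :=
  (1/(m.factorial : ℝ)) * ∑ σ : Equiv.Perm (Fin m), monom (permActN σ α) x

theorem exp_sum_mul_le_of_sum_le_one {ι : Type*} [Fintype ι] {w a : ι → ℝ}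
    (hw : ∀ i, 0 ≤ w i) (hw1 : ∑ i, w i ≤ 1) :
    Real.exp (∑ i, w i * a i) ≤ ∑ i, w i * Real.exp (a i) + (1 - ∑ i, w i) := by
  -- Jensen for `exp` after adding the point `0` (index `none`) with weight `1 - ∑ i, w i`.
  have := convexOn_exp.map_sum_le (t := Finset.univ)
    (w := fun o : Option ι => o.elim (1 - ∑ i, w i) w) (p := fun o => o.elim 0 a)
    (by rintro (_ | i) -; exacts [sub_nonneg.2 hw1, hw i]) (by simp [Fintype.sum_option]) (by simp)
  simpa [Fintype.sum_option, add_comm] using this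

theorem eq_of_exp_sum_mul_eq_of_sum_le_one {ι : Type*} [Fintype ι] {w a : ι → ℝ}
    (hw : ∀ i, 0 ≤ w i) (hw1 : ∑ i, w i ≤ 1)
    (h : Real.exp (∑ i, w i * a i) = ∑ i, w i * Real.exp (a i) + (1 - ∑ i, w i)) :
    (∀ i j, w i ≠ 0 → w j ≠ 0 → a i = a j) ∧ (∑ i, w i < 1 → ∀ i, w i ≠ 0 → a i = 0) := by
  have key := (strictConvexOn_exp.map_sum_eq_iff_of_nonneg (t := Finset.univ)
    (w := fun o : Option ι => o.elim (1 - ∑ i, w i) w) (p := fun o => o.elim 0 a)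
    (by rintro (_ | i) -; exacts [sub_nonneg.2 hw1, hw i])
    (by simp [Fintype.sum_option]) (by simp)).1 (by simpa [Fintype.sum_option, add_comm] using h)
  refine ⟨fun i j hi hj => key (mem_univ (some i)) hi (mem_univ (some j)) hj, fun hlt i hi => ?_⟩
  exact key (mem_univ (some i)) hi (mem_univ none) (by simpa [sub_eq_zero] using hlt.ne')

theorem exists_sum_le_one_of_mem_convexHull_insert_zero {ι E : Type*} [Fintype ι] [Nonempty ι]
    [AddCommGroup E] [Module ℝ E] {P : ι → E} {v : E}
    (hv : v ∈ convexHull ℝ (insert 0 (Set.range P))) :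
    ∃ q : ι → ℝ, (∀ i, 0 ≤ q i) ∧ ∑ i, q i ≤ 1 ∧ v = ∑ i, q i • P i := by
  classical
  rw [convexHull_insert (Set.range_nonempty P)] at hv
  obtain ⟨_, rfl, p, hp, hvp⟩ := mem_convexJoin.1 hv
  have hrange :
      Set.range P = Fintype.linearCombination ℝ P '' Set.range (fun i => Pi.single i 1) := by
    rw [← Set.range_comp]
    congr 1
    ext i
    simp [Fintype.linearCombination_apply_single]
  rw [hrange, ← LinearMap.image_convexHull, convexHull_rangle_single_eq_stdSimplex] at hp
  obtain ⟨w, ⟨hw0, hw1⟩, rfl⟩ := hp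
  obtain ⟨s, t, hs, ht, hst, rfl⟩ := hvp
  refine ⟨t • w, fun i => mul_nonneg ht (hw0 i), ?_, ?_⟩
  · calc ∑ i, (t • w) i = t := by simp [← Finset.mul_sum, hw1]
      _ ≤ 1 := by linarith
  · simp [Fintype.linearCombination_apply, Finset.smul_sum, smul_smul]

theorem mul_pow_rpow_one_div_sub {a : ℝ} (ha : 0 ≤ a) {m k : ℕ} (hmk : m < k) :
    a * (a ^ (1 / ((k : ℝ) - m))) ^ m = (a ^ (1 / ((k : ℝ) - m))) ^ k := by
  have hkm : ((k - m : ℕ) : ℝ) = (k : ℝ) - m := Nat.cast_sub hmk.le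
  have hroot : (a ^ (1 / ((k : ℝ) - m))) ^ (k - m) = a := by
    rw [← Real.rpow_natCast, hkm, one_div,
      Real.rpow_inv_rpow ha (sub_ne_zero.2 (Nat.cast_lt.2 hmk).ne')]
  rw [← pow_sub_mul_pow _ hmk.le, hroot]

theorem rpow_div_sub_eq_pow {a : ℝ} (ha : 0 ≤ a) (m k : ℕ) :
    a ^ ((m : ℝ) / ((k : ℝ) - m)) = (a ^ (1 / ((k : ℝ) - m))) ^ m := by
  rw [← Real.rpow_natCast, ← Real.rpow_mul ha, one_div_mul_eq_div]

section

variable {n : ℕ}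

theorem permAct_permAct (σ τ : Equiv.Perm (Fin n)) (v : Fin n → ℝ) :
    permAct σ (permAct τ v) = permAct (σ * τ) v := by
  ext i
  simp [permAct, mul_inv_rev]

theorem sum_permAct (σ : Equiv.Perm (Fin n)) (v : Fin n → ℝ) :
    ∑ i, permAct σ v i = ∑ i, v i :=
  Equiv.sum_comp σ⁻¹ v

theorem sum_permActN (σ : Equiv.Perm (Fin n)) (α : Fin n → ℕ) :
    ∑ i, permActN σ α i = ∑ i, α i :=
  Equiv.sum_comp σ⁻¹ α

theorem monom_eq_exp_dotp (α : Fin n → ℕ) {x : Fin n → ℝ} (hx : ∀ i, 0 < x i) :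
    monom α x = Real.exp (dotp (fun i => (α i : ℝ)) (Real.log ∘ x)) := by
  simp only [monom, dotp, Real.exp_sum, Function.comp_apply, Real.exp_nat_mul,
    Real.exp_log (hx _)]

theorem mmean_eq_sum_exp (α : Fin n → ℕ) {x : Fin n → ℝ} (hx : ∀ i, 0 < x i) :
    mmean α x = 1 / (n.factorial : ℝ) *
      ∑ σ : Equiv.Perm (Fin n),
        Real.exp (dotp (permAct σ (fun i => (α i : ℝ))) (Real.log ∘ x)) := by
  simp only [mmean, monom_eq_exp_dotp _ hx]
  rfl

theorem mmean_pos (α : Fin n → ℕ) {x : Fin n → ℝ} (hx : ∀ i, 0 < x i) : 0 < mmean α x := by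
  rw [mmean_eq_sum_exp α hx]
  exact mul_pos (by positivity) (Finset.sum_pos (fun σ _ => Real.exp_pos _) univ_nonempty)

theorem mmean_smul (α : Fin n → ℕ) (s : ℝ) (x : Fin n → ℝ) :
    mmean α (s • x) = s ^ (∑ i, α i) * mmean α x := by
  have hmonom (σ : Equiv.Perm (Fin n)) :
      monom (permActN σ α) (s • x) = s ^ (∑ i, α i) * monom (permActN σ α) x := by
    simp only [monom, Pi.smul_apply, smul_eq_mul, mul_pow, Finset.prod_mul_distrib,
      Finset.prod_pow_eq_pow_sum, sum_permActN]
  simp only [mmean, hmonom, ← Finset.mul_sum]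
  ring

theorem mmean_const (α : Fin n → ℕ) (t : ℝ) : mmean α (fun _ => t) = t ^ (∑ i, α i) := by
  have hone : mmean α 1 = 1 := by
    simp [mmean, monom, Fintype.card_perm, Nat.factorial_ne_zero]
  have hconst : (fun _ => t : Fin n → ℝ) = t • 1 := by ext; simp
  rw [hconst, mmean_smul, hone, mul_one]

theorem dotp_permAct_swap_sub (v y : Fin n → ℝ) {i j : Fin n} (hij : i ≠ j) :
    dotp (permAct (Equiv.swap i j) v) y - dotp v y = (v j - v i) * (y i - y j) := by
  rw [dotp, dotp, ← Finset.sum_sub_distrib, Fintype.sum_eq_add i j hij]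
  · simp only [permAct, Equiv.swap_inv, Equiv.swap_apply_left, Equiv.swap_apply_right]
    ring
  · rintro m ⟨hmi, hmj⟩
    simp [permAct, Equiv.swap_apply_of_ne_of_ne hmi hmj]

theorem eq_of_forall_dotp_permAct_eq {u y : Fin n → ℝ} (hu : ∃ a b, u a ≠ u b)
    (h : ∀ ρ ρ' : Equiv.Perm (Fin n), dotp (permAct ρ u) y = dotp (permAct ρ' u) y) :
    ∀ i j, y i = y j := by
  obtain ⟨a, b, hab⟩ := hu
  have hab' : a ≠ b := fun h => hab (congrArg u h)
  suffices hb : ∀ i, y i = y b from fun i j => (hb i).trans (hb j).symm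
  intro i
  rcases eq_or_ne i b with rfl | hib
  · rfl
  set v := permAct (Equiv.swap a i) u
  have hvi : v i = u a := by simp [v, permAct]
  have hvb : v b = u b := by
    simp [v, permAct, Equiv.swap_apply_of_ne_of_ne hab'.symm hib.symm]
  have hswap := dotp_permAct_swap_sub v y hib
  rw [permAct_permAct, h _ (Equiv.swap a i), sub_self, hvi, hvb] at hswap
  rcases mul_eq_zero.1 hswap.symm with h0 | h0
  · exact absurd (sub_eq_zero.1 h0).symm hab
  · exact sub_eq_zero.1 h0

theorem exists_ne_of_sum_eq_zero {u : Fin n → ℝ} (hsum : ∑ i, u i = 0) (hu : u ≠ 0) :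
    ∃ a b, u a ≠ u b := by
  by_contra! hconst
  obtain ⟨a, ha⟩ := Function.ne_iff.1 hu
  have hn : (n : ℝ) ≠ 0 := Nat.cast_ne_zero.2 (Fin.pos a).ne'
  rw [Fintype.sum_congr _ _ (fun i => hconst i a), Finset.sum_const, Finset.card_univ,
    Fintype.card_fin, nsmul_eq_mul] at hsum
  exact ha ((mul_eq_zero.1 hsum).resolve_left hn)

variable {lam mu : Fin n → ℕ} {q : Equiv.Perm (Fin n) → ℝ}

theorem sum_eq_mul_sum_of_eq_sum_smul_permAct
    (hrep : (fun i => (mu i : ℝ)) = ∑ τ, q τ • permAct τ (fun i => (lam i : ℝ))) :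
    ∑ i, (mu i : ℝ) = (∑ τ, q τ) * ∑ i, (lam i : ℝ) := by
  have := congrArg (fun v : Fin n → ℝ => ∑ i, v i) hrep
  simp only [Finset.sum_apply, Pi.smul_apply, smul_eq_mul] at this
  rw [this, Finset.sum_comm, Finset.sum_mul]
  simp only [← Finset.mul_sum, sum_permAct]

theorem exists_ne_of_sum_le_card
    (hrep : (fun i => (mu i : ℝ)) = ∑ τ, q τ • permAct τ (fun i => (lam i : ℝ)))
    (hq1 : ∑ τ, q τ < 1) (hmu0 : 0 < ∑ i, mu i) (hn : ∑ i, lam i ≤ n) :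
    ∃ a b, (lam a : ℝ) ≠ lam b := by
  -- For constant `λ = (k, …, k)` we get `μ = θ λ` with some `0 < μ_a < k`, so `|λ| = n k ≥ 2 n`.
  by_contra! hconst
  obtain ⟨a, ha⟩ := Finset.exists_ne_zero_of_sum_ne_zero hmu0.ne'
  have hperm (τ : Equiv.Perm (Fin n)) : permAct τ (fun i => (lam i : ℝ)) = fun _ => (lam a : ℝ) :=
    funext fun i => hconst _ a
  have hmua : (mu a : ℝ) = (∑ τ, q τ) * lam a := by
    simpa [hperm, Finset.sum_apply, ← Finset.sum_mul] using congrFun hrep a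
  have hmua0 : (0 : ℝ) < mu a := by exact_mod_cast Nat.pos_of_ne_zero ha.2
  have hlam0 : (0 : ℝ) < lam a :=
    (Nat.cast_nonneg _).lt_of_ne fun h => by rw [← h, mul_zero] at hmua; linarith
  have hlt : mu a < lam a := by
    exact_mod_cast hmua ▸ mul_lt_of_lt_one_left hlam0 hq1
  have hsum : ∑ i, lam i = n * lam a := by
    simp [Finset.sum_congr rfl fun i _ => (Nat.cast_inj.1 (hconst i a) : lam i = lam a)]
  have h2 : 2 ≤ lam a := by omega
  have := Fin.pos a
  nlinarith

theorem dotp_permAct_eq_sum_of_eq_sum_smul_permAct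
    (hrep : (fun i => (mu i : ℝ)) = ∑ τ, q τ • permAct τ (fun i => (lam i : ℝ)))
    (σ : Equiv.Perm (Fin n)) (y : Fin n → ℝ) :
    dotp (permAct σ (fun i => (mu i : ℝ))) y =
      ∑ τ, q τ * dotp (permAct (σ * τ) (fun i => (lam i : ℝ))) y := by
  simp only [hrep, ← permAct_permAct σ]
  simp only [dotp, permAct, Finset.sum_apply, Pi.smul_apply, smul_eq_mul, Finset.sum_mul,
    Finset.mul_sum, mul_assoc]
  exact Finset.sum_comm

theorem mmean_eq_of_eq_sum_smul_permAct
    (hrep : (fun i => (mu i : ℝ)) = ∑ τ, q τ • permAct τ (fun i => (lam i : ℝ)))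
    {x : Fin n → ℝ} (hx : ∀ i, 0 < x i) :
    mmean mu x = 1 / (n.factorial : ℝ) * ∑ σ : Equiv.Perm (Fin n),
      Real.exp (∑ τ, q τ * dotp (permAct (σ * τ) (fun i => (lam i : ℝ))) (Real.log ∘ x)) := by
  simp only [mmean_eq_sum_exp mu hx, dotp_permAct_eq_sum_of_eq_sum_smul_permAct hrep]

theorem sum_mul_mmean_add_eq (q : Equiv.Perm (Fin n) → ℝ) (lam : Fin n → ℕ)
    {x : Fin n → ℝ} (hx : ∀ i, 0 < x i) :
    (∑ τ, q τ) * mmean lam x + (1 - ∑ τ, q τ) = 1 / (n.factorial : ℝ) * ∑ σ : Equiv.Perm (Fin n),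
      (∑ τ, q τ * Real.exp (dotp (permAct (σ * τ) (fun i => (lam i : ℝ))) (Real.log ∘ x)) +
        (1 - ∑ τ, q τ)) := by
  have hshift (τ : Equiv.Perm (Fin n)) := Equiv.sum_comp (Equiv.mulRight τ)
    fun ρ => Real.exp (dotp (permAct ρ (fun i => (lam i : ℝ))) (Real.log ∘ x))
  simp only [Equiv.coe_mulRight] at hshift
  rw [Finset.sum_add_distrib, Finset.sum_comm, mmean_eq_sum_exp lam hx]
  simp only [← Finset.mul_sum, hshift, ← Finset.sum_mul, Finset.sum_const, Finset.card_univ,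
    Fintype.card_perm, Fintype.card_fin, nsmul_eq_mul]
  field_simp

theorem mmean_le_of_eq_sum_smul_permAct (hq : ∀ τ, 0 ≤ q τ) (hq1 : ∑ τ, q τ ≤ 1)
    (hrep : (fun i => (mu i : ℝ)) = ∑ τ, q τ • permAct τ (fun i => (lam i : ℝ)))
    {x : Fin n → ℝ} (hx : ∀ i, 0 < x i) :
    mmean mu x ≤ (∑ τ, q τ) * mmean lam x + (1 - ∑ τ, q τ) := by
  rw [mmean_eq_of_eq_sum_smul_permAct hrep hx, sum_mul_mmean_add_eq q lam hx]
  gcongr with σ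
  exact exp_sum_mul_le_of_sum_le_one hq hq1

theorem dotp_permAct_eq_of_mmean_eq (hq : ∀ τ, 0 ≤ q τ) (hq1 : ∑ τ, q τ ≤ 1)
    (hrep : (fun i => (mu i : ℝ)) = ∑ τ, q τ • permAct τ (fun i => (lam i : ℝ)))
    {x : Fin n → ℝ} (hx : ∀ i, 0 < x i)
    (h : mmean mu x = (∑ τ, q τ) * mmean lam x + (1 - ∑ τ, q τ)) (σ : Equiv.Perm (Fin n)) :
    (∀ τ τ', q τ ≠ 0 → q τ' ≠ 0 →
      dotp (permAct (σ * τ) (fun i => (lam i : ℝ))) (Real.log ∘ x) =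
        dotp (permAct (σ * τ') (fun i => (lam i : ℝ))) (Real.log ∘ x)) ∧
    (∑ τ, q τ < 1 → ∀ τ, q τ ≠ 0 →
      dotp (permAct (σ * τ) (fun i => (lam i : ℝ))) (Real.log ∘ x) = 0) := by
  rw [mmean_eq_of_eq_sum_smul_permAct hrep hx, sum_mul_mmean_add_eq q lam hx] at h
  have hsum := (Finset.sum_eq_sum_iff_of_le fun σ _ => exp_sum_mul_le_of_sum_le_one
    (a := fun τ => dotp (permAct (σ * τ) (fun i => (lam i : ℝ))) (Real.log ∘ x)) hq hq1).1
    (mul_left_cancel₀ (by positivity) h)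
  exact eq_of_exp_sum_mul_eq_of_sum_le_one hq hq1 (hsum σ (mem_univ σ))

theorem mmean_sub_mul_mmean_add_eq (lam mu : Fin n → ℕ) {c θ t : ℝ} (ht : t ≠ 0)
    (hcrit : c * θ * t ^ (∑ i, mu i) = t ^ (∑ i, lam i)) (x : Fin n → ℝ) :
    mmean lam x - c * mmean mu x + c * (1 - θ) * t ^ (∑ i, mu i) =
      c * t ^ (∑ i, mu i) * (θ * mmean lam (t⁻¹ • x) + (1 - θ) - mmean mu (t⁻¹ • x)) := by
  have hscale (α : Fin n → ℕ) : mmean α x = t ^ (∑ i, α i) * mmean α (t⁻¹ • x) := by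
    rw [← mmean_smul, smul_inv_smul₀ ht]
  rw [hscale lam, hscale mu]
  linear_combination (-mmean lam (t⁻¹ • x)) * hcrit

theorem le_mmean_sub_mul_mmean (hq : ∀ τ, 0 ≤ q τ) (hq1 : ∑ τ, q τ ≤ 1)
    (hrep : (fun i => (mu i : ℝ)) = ∑ τ, q τ • permAct τ (fun i => (lam i : ℝ)))
    {c t : ℝ} (hc : 0 ≤ c) (ht : 0 < t)
    (hcrit : c * (∑ τ, q τ) * t ^ (∑ i, mu i) = t ^ (∑ i, lam i))
    {x : Fin n → ℝ} (hx : ∀ i, 0 < x i) :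
    -(c * (1 - ∑ τ, q τ) * t ^ (∑ i, mu i)) ≤ mmean lam x - c * mmean mu x := by
  have hx' : ∀ i, 0 < (t⁻¹ • x) i := fun i => mul_pos (inv_pos.2 ht) (hx i)
  have hgap := mmean_sub_mul_mmean_add_eq lam mu ht.ne' hcrit x
  have := mmean_le_of_eq_sum_smul_permAct hq hq1 hrep hx'
  have : 0 ≤ c * t ^ (∑ i, mu i) *
      ((∑ τ, q τ) * mmean lam (t⁻¹ • x) + (1 - ∑ τ, q τ) - mmean mu (t⁻¹ • x)) := by
    have := ht.le
    apply mul_nonneg (by positivity)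
    linarith
  linarith

theorem mmean_sub_mul_mmean_eq_iff (hq : ∀ τ, 0 ≤ q τ) (hq1 : ∑ τ, q τ < 1) (hq0 : 0 < ∑ τ, q τ)
    (hrep : (fun i => (mu i : ℝ)) = ∑ τ, q τ • permAct τ (fun i => (lam i : ℝ)))
    (hlam : ∃ a b, (lam a : ℝ) ≠ lam b) {c t : ℝ} (hc : 0 < c) (ht : 0 < t)
    (hcrit : c * (∑ τ, q τ) * t ^ (∑ i, mu i) = t ^ (∑ i, lam i))
    {x : Fin n → ℝ} (hx : ∀ i, 0 < x i) :
    mmean lam x - c * mmean mu x = -(c * (1 - ∑ τ, q τ) * t ^ (∑ i, mu i)) ↔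
      ∀ i, x i = t := by
  constructor
  · intro h
    set x' := t⁻¹ • x
    have hx' : ∀ i, 0 < x' i := fun i => mul_pos (inv_pos.2 ht) (hx i)
    have hgap := mmean_sub_mul_mmean_add_eq lam mu ht.ne' hcrit x
    rw [h, neg_add_cancel, eq_comm, mul_eq_zero, sub_eq_zero] at hgap
    have heq := hgap.resolve_left (by positivity)
    obtain ⟨τ₀, -, hτ₀⟩ := Finset.exists_ne_zero_of_sum_ne_zero hq0.ne'
    have hzero (ρ : Equiv.Perm (Fin n)) :
        dotp (permAct ρ (fun i => (lam i : ℝ))) (Real.log ∘ x') = 0 := by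
      simpa using (dotp_permAct_eq_of_mmean_eq hq hq1.le hrep hx' heq.symm (ρ * τ₀⁻¹)).2 hq1 τ₀ hτ₀
    have hconst := eq_of_forall_dotp_permAct_eq hlam fun ρ ρ' => by rw [hzero, hzero]
    have hL : ∑ j, (lam j : ℝ) ≠ 0 := by
      obtain ⟨a, b, hab⟩ := hlam
      intro hL0
      have hlam0 := (Finset.sum_eq_zero_iff_of_nonneg fun j _ => (lam j).cast_nonneg).1 hL0
      exact hab (by rw [hlam0 a (mem_univ a), hlam0 b (mem_univ b)])
    intro i
    have hsum : (∑ j, (lam j : ℝ)) * Real.log (x' i) = 0 := by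
      rw [Finset.sum_mul, ← hzero 1]
      exact Finset.sum_congr rfl fun j _ => by rw [hconst j i]; simp [permAct]
    have hx'i := Real.eq_one_of_pos_of_log_eq_zero (hx' i) ((mul_eq_zero.1 hsum).resolve_left hL)
    exact ((inv_mul_eq_one₀ ht.ne').1 hx'i).symm
  · rintro hxt
    rw [show x = fun _ => t from funext hxt, mmean_const, mmean_const]
    linear_combination -hcrit

theorem eq_of_sum_eq_zero (hsum : ∑ i, lam i = ∑ i, mu i) (h0 : ∑ i, lam i = 0) : lam = mu := by
  ext i
  have hlam := Finset.sum_eq_zero_iff.1 h0 i (mem_univ i)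
  have hmu := Finset.sum_eq_zero_iff.1 (hsum ▸ h0) i (mem_univ i)
  rw [hlam, hmu]

theorem sum_eq_one_of_sum_eq
    (hrep : (fun i => (mu i : ℝ)) = ∑ τ, q τ • permAct τ (fun i => (lam i : ℝ)))
    (hsum : ∑ i, lam i = ∑ i, mu i) (hpos : 0 < ∑ i, lam i) : ∑ τ, q τ = 1 := by
  have h := sum_eq_mul_sum_of_eq_sum_smul_permAct hrep
  have hL : (0 : ℝ) < ∑ i, (lam i : ℝ) := by exact_mod_cast hpos
  rw [← Nat.cast_sum, ← hsum, Nat.cast_sum] at h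
  exact (mul_eq_right₀ hL.ne').1 h.symm

theorem mmean_le_mmean_of_sum_eq (hq : ∀ τ, 0 ≤ q τ) (hq1 : ∑ τ, q τ ≤ 1)
    (hrep : (fun i => (mu i : ℝ)) = ∑ τ, q τ • permAct τ (fun i => (lam i : ℝ)))
    (hsum : ∑ i, lam i = ∑ i, mu i) {x : Fin n → ℝ} (hx : ∀ i, 0 < x i) :
    mmean mu x ≤ mmean lam x := by
  rcases Nat.eq_zero_or_pos (∑ i, lam i) with h0 | hpos
  · rw [eq_of_sum_eq_zero hsum h0]
  · simpa [sum_eq_one_of_sum_eq hrep hsum hpos] using mmean_le_of_eq_sum_smul_permAct hq hq1 hrep hx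

theorem exists_permAct_ne_of_ne (hlam : Antitone lam) (hmu : Antitone mu)
    (hrep : (fun i => (mu i : ℝ)) = ∑ τ, q τ • permAct τ (fun i => (lam i : ℝ)))
    (hq1 : ∑ τ, q τ = 1) (hne : lam ≠ mu) :
    ∃ τ τ', q τ ≠ 0 ∧ q τ' ≠ 0 ∧
      permAct τ (fun i => (lam i : ℝ)) ≠ permAct τ' (fun i => (lam i : ℝ)) := by
  by_contra! hsame
  obtain ⟨τ₀, -, hτ₀⟩ := Finset.exists_ne_zero_of_sum_ne_zero (hq1 ▸ one_ne_zero)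
  have hperm : (fun i => (mu i : ℝ)) = permAct τ₀ (fun i => (lam i : ℝ)) := by
    rw [hrep, ← one_smul ℝ (permAct τ₀ _), ← hq1, Finset.sum_smul]
    refine Finset.sum_congr rfl fun τ _ => ?_
    rcases eq_or_ne (q τ) 0 with hτ | hτ
    · rw [hτ, zero_smul, zero_smul]
    · rw [hsame τ τ₀ hτ hτ₀]
  have hmu_eq : mu = lam ∘ ⇑τ₀⁻¹ := funext fun i =>
    Nat.cast_injective (R := ℝ) (congrFun hperm i)
  refine hne (Eq.symm ?_)
  rw [hmu_eq] at hmu ⊢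
  exact Tuple.unique_antitone (f := lam) (σ := τ₀⁻¹) (τ := 1) hmu hlam

theorem exists_eq_const_of_mmean_eq (hlam : Antitone lam) (hmu : Antitone mu)
    (hq : ∀ τ, 0 ≤ q τ) (hq1 : ∑ τ, q τ ≤ 1)
    (hrep : (fun i => (mu i : ℝ)) = ∑ τ, q τ • permAct τ (fun i => (lam i : ℝ)))
    (hsum : ∑ i, lam i = ∑ i, mu i) (hne : lam ≠ mu) {x : Fin n → ℝ} (hx : ∀ i, 0 < x i)
    (h : mmean lam x = mmean mu x) : ∃ t, ∀ i, x i = t := by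
  have hpos : 0 < ∑ i, lam i := Nat.pos_of_ne_zero fun h0 => hne (eq_of_sum_eq_zero hsum h0)
  have hθ := sum_eq_one_of_sum_eq hrep hsum hpos
  obtain ⟨τ, τ', hτ, hτ', hne'⟩ := exists_permAct_ne_of_ne hlam hmu hrep hθ hne
  set u := permAct τ (fun i => (lam i : ℝ)) - permAct τ' (fun i => (lam i : ℝ))
  have hu (ρ : Equiv.Perm (Fin n)) : dotp (permAct ρ u) (Real.log ∘ x) = 0 := by
    have := (dotp_permAct_eq_of_mmean_eq hq hq1 hrep hx (by rw [hθ, h]; ring) ρ).1 τ τ' hτ hτ'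
    rw [← permAct_permAct, ← permAct_permAct, ← sub_eq_zero] at this
    rw [← this]
    simp only [u, dotp, permAct, Pi.sub_apply, sub_mul, Finset.sum_sub_distrib]
  have hsumu : ∑ i, u i = 0 := by
    simp only [u, Pi.sub_apply, Finset.sum_sub_distrib, sum_permAct, sub_self]
  obtain ⟨a, b, hab⟩ := exists_ne_of_sum_eq_zero hsumu (sub_ne_zero.2 hne')
  have hlog := eq_of_forall_dotp_permAct_eq ⟨a, b, hab⟩ fun ρ ρ' => by rw [hu, hu]
  exact ⟨x a, fun i => Real.log_injOn_pos (hx i) (hx a) (hlog i a)⟩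

theorem lt_mmean_sub_mul_mmean_of_sum_eq_zero (hq : ∀ τ, 0 ≤ q τ) (hq1 : ∑ τ, q τ ≤ 1)
    (hrep : (fun i => (mu i : ℝ)) = ∑ τ, q τ • permAct τ (fun i => (lam i : ℝ)))
    (hmu0 : ∑ i, mu i = 0) (hlam0 : 0 < ∑ i, lam i) {c : ℝ} (hc : 0 < c)
    {x : Fin n → ℝ} (hx : ∀ i, 0 < x i) :
    -c < mmean lam x - c * mmean mu x := by
  have hθ : ∑ τ, q τ = 0 := by
    have h := sum_eq_mul_sum_of_eq_sum_smul_permAct hrep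
    rw [← Nat.cast_sum, ← Nat.cast_sum, hmu0, Nat.cast_zero, eq_comm, mul_eq_zero] at h
    exact h.resolve_right (Nat.cast_ne_zero.2 hlam0.ne')
  have hle := mmean_le_of_eq_sum_smul_permAct hq hq1 hrep hx
  rw [hθ, zero_mul, zero_add, sub_zero] at hle
  nlinarith [mmean_pos lam hx]

theorem generalizedMuirhead_of_sum_lt (hq : ∀ τ, 0 ≤ q τ) (hq1 : ∑ τ, q τ ≤ 1)
    (hrep : (fun i => (mu i : ℝ)) = ∑ τ, q τ • permAct τ (fun i => (lam i : ℝ)))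
    {c : ℝ} (hc : 0 < c) {L M : ℝ} (hL : L = ∑ i, (lam i : ℝ)) (hM : M = ∑ i, (mu i : ℝ))
    {δ t₀ : ℝ} (hδ : δ = -c * ((L - M)/L) * (c * M / L) ^ (M/(L - M)))
    (ht₀ : t₀ = (c * M / L) ^ ((1 : ℝ)/(L - M)))
    (hlt : ∑ i, mu i < ∑ i, lam i) (hn : ∑ i, lam i ≤ n) :
    (∀ x : Fin n → ℝ, (∀ i, 0 < x i) → δ ≤ mmean lam x - c * mmean mu x) ∧
    (∀ x : Fin n → ℝ, (∀ i, 0 < x i) →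
      (mmean lam x - c * mmean mu x = δ ↔ ∀ i, x i = t₀)) := by
  rw [← Nat.cast_sum] at hL hM
  have hLpos : 0 < L := hL ▸ Nat.cast_pos.2 (Nat.zero_lt_of_lt hlt)
  have hθ : ∑ τ, q τ = M / L := by
    rw [eq_div_iff hLpos.ne', hL, hM, Nat.cast_sum, Nat.cast_sum,
      sum_eq_mul_sum_of_eq_sum_smul_permAct hrep]
  rcases Nat.eq_zero_or_pos (∑ i, mu i) with hmu0 | hmu0
  · -- `0 ^ 0 = 1` for `rpow`, so here `δ = -c`, while `t₀ = 0` lies outside the orthant.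
    have hM0 : M = 0 := by rw [hM, hmu0, Nat.cast_zero]
    have hδc : δ = -c := by simp [hδ, hM0, hLpos.ne']
    have ht₀0 : t₀ = 0 := by simp [ht₀, hM0, hLpos.ne']
    have hgt x (hx : ∀ i, 0 < x i) : δ < mmean lam x - c * mmean mu x :=
      hδc ▸ lt_mmean_sub_mul_mmean_of_sum_eq_zero hq hq1 hrep hmu0 (Nat.zero_lt_of_lt hlt) hc hx
    refine ⟨fun x hx => (hgt x hx).le, fun x hx => iff_of_false (hgt x hx).ne' fun hxt => ?_⟩
    have hi := hx ⟨0, Nat.zero_lt_of_lt (hlt.trans_le hn)⟩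
    rw [hxt, ht₀0] at hi
    exact hi.false
  · have hθ0 : 0 < ∑ τ, q τ := by rw [hθ, hM]; positivity
    have hθ1 : ∑ τ, q τ < 1 := by
      rw [hθ, div_lt_one hLpos, hL, hM]
      exact_mod_cast hlt
    have hbase : c * M / L = c * ∑ τ, q τ := by rw [hθ, mul_div_assoc]
    have hcθ : 0 ≤ c * ∑ τ, q τ := by positivity
    rw [hbase, hL, hM] at ht₀
    rw [hbase, hL, hM, rpow_div_sub_eq_pow hcθ, ← ht₀] at hδ
    have hcrit : c * (∑ τ, q τ) * t₀ ^ (∑ i, mu i) = t₀ ^ (∑ i, lam i) :=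
      ht₀ ▸ mul_pow_rpow_one_div_sub hcθ hlt
    have hδ' : δ = -(c * (1 - ∑ τ, q τ) * t₀ ^ (∑ i, mu i)) := by
      rw [hδ, ← hL, ← hM, hθ]
      field_simp
    have ht₀pos : 0 < t₀ := ht₀ ▸ Real.rpow_pos_of_pos (by positivity) _
    have hlam := exists_ne_of_sum_le_card hrep hθ1 hmu0 hn
    exact ⟨fun x hx => hδ' ▸ le_mmean_sub_mul_mmean hq hq1 hrep hc.le ht₀pos hcrit hx,
      fun x hx => hδ' ▸ mmean_sub_mul_mmean_eq_iff hq hθ1 hθ0 hrep hlam hc ht₀pos hcrit hx⟩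

theorem generalizedMuirhead_of_sum_eq (hlam : Antitone lam) (hmu : Antitone mu)
    (hq : ∀ τ, 0 ≤ q τ) (hq1 : ∑ τ, q τ ≤ 1)
    (hrep : (fun i => (mu i : ℝ)) = ∑ τ, q τ • permAct τ (fun i => (lam i : ℝ)))
    (hsum : ∑ i, lam i = ∑ i, mu i) {c : ℝ} (hc1 : c ≤ 1) :
    (∀ x : Fin n → ℝ, (∀ i, 0 < x i) → 0 ≤ mmean lam x - c * mmean mu x) ∧
    (c < 1 → ∀ x : Fin n → ℝ, (∀ i, 0 < x i) → 0 < mmean lam x - c * mmean mu x) ∧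
    (c = 1 →
      (lam = mu → ∀ x : Fin n → ℝ, (∀ i, 0 < x i) → mmean lam x - mmean mu x = 0) ∧
      (lam ≠ mu → ∀ x : Fin n → ℝ, (∀ i, 0 < x i) →
        (mmean lam x - mmean mu x = 0 ↔ ∃ t : ℝ, ∀ i, x i = t))) := by
  have hle (x : Fin n → ℝ) (hx : ∀ i, 0 < x i) := mmean_le_mmean_of_sum_eq hq hq1 hrep hsum hx
  refine ⟨fun x hx => ?_, fun hc x hx => ?_, fun _ => ⟨fun h x _ => by rw [h, sub_self],
    fun hne x hx => ⟨fun h => ?_, fun ⟨t, ht⟩ => ?_⟩⟩⟩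
  · nlinarith [hle x hx, mmean_pos mu hx]
  · nlinarith [hle x hx, mmean_pos mu hx]
  · exact exists_eq_const_of_mmean_eq hlam hmu hq hq1 hrep hsum hne hx (sub_eq_zero.1 h)
  · rw [show x = fun _ => t from funext ht, mmean_const, mmean_const, hsum, sub_self]

end

/-- Generalized Muirhead inequality: for integer partitions `lam ⪰* mu`
(i.e. `mu ∈ conv({0} ∪ S_n·lam)`) and `c > 0`, with `L = |lam|`, `M = |mu|`:
(1) if `M < L` and `L ≤ n`, then `m_lam - c·m_mu ≥ δ` on the open positive orthant
with `δ = -c((L-M)/L)(cM/L)^{M/(L-M)}`, with equality exactly at the diagonal point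
`x₁ = ⋯ = xₙ = (cM/L)^{1/(L-M)}`;
(2) if `L = M` and `0 < c ≤ 1`, then `m_lam - c·m_mu ≥ 0` on the open positive
orthant, strictly if `c < 1`; for `c = 1` equality holds everywhere if `lam = mu`
and exactly on the diagonal otherwise. -/
theorem stmt15 {n : ℕ} (lam mu : Fin n → ℕ)
    (hlam : Antitone lam) (hmu : Antitone mu)
    (hdom : (fun i => (mu i : ℝ)) ∈ convexHull ℝ
      (insert (0 : Fin n → ℝ)
        {v | ∃ σ : Equiv.Perm (Fin n), v = fun i => ((permActN σ lam) i : ℝ)}))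
    (c : ℝ) (hc : 0 < c)
    (L M : ℝ) (hL : L = ∑ i, (lam i : ℝ)) (hM : M = ∑ i, (mu i : ℝ))
    (δ t₀ : ℝ) (hδ : δ = -c * ((L - M)/L) * (c * M / L) ^ (M/(L - M)))
    (ht₀ : t₀ = (c * M / L) ^ ((1 : ℝ)/(L - M))) :
    ((∑ i, mu i < ∑ i, lam i) → (∑ i, lam i ≤ n) →
      (∀ x : Fin n → ℝ, (∀ i, 0 < x i) → δ ≤ mmean lam x - c * mmean mu x) ∧
      (∀ x : Fin n → ℝ, (∀ i, 0 < x i) →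
        (mmean lam x - c * mmean mu x = δ ↔ ∀ i, x i = t₀))) ∧
    ((∑ i, lam i = ∑ i, mu i) → c ≤ 1 →
      (∀ x : Fin n → ℝ, (∀ i, 0 < x i) → 0 ≤ mmean lam x - c * mmean mu x) ∧
      (c < 1 → ∀ x : Fin n → ℝ, (∀ i, 0 < x i) →
        0 < mmean lam x - c * mmean mu x) ∧
      (c = 1 →
        (lam = mu → ∀ x : Fin n → ℝ, (∀ i, 0 < x i) →
          mmean lam x - mmean mu x = 0) ∧
        (lam ≠ mu → ∀ x : Fin n → ℝ, (∀ i, 0 < x i) →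
          (mmean lam x - mmean mu x = 0 ↔ ∃ t : ℝ, ∀ i, x i = t)))) := by
  have horbit : {v | ∃ σ : Equiv.Perm (Fin n), v = fun i => ((permActN σ lam) i : ℝ)} =
      Set.range fun σ => permAct σ (fun i => (lam i : ℝ)) := by
    ext v
    exact exists_congr fun σ => eq_comm
  rw [horbit] at hdom
  obtain ⟨q, hq, hq1, hrep⟩ := exists_sum_le_one_of_mem_convexHull_insert_zero hdom
  exact ⟨fun hlt hn => generalizedMuirhead_of_sum_lt hq hq1 hrep hc hL hM hδ ht₀ hlt hn,
    fun hsum hc1 => generalizedMuirhead_of_sum_eq hlam hmu hq hq1 hrep hsum hc1⟩
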